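/- In a recollement of abelian categories, an object F of the middle category is both stable and costable (bistable) if and only if F ≅ c(e(F)), where c is the intermediate extension functor. -/

import Mathlib

open CategoryTheory Limits

universe v u v₁ u₁ v₂ u₂

/-- A recollement of abelian categories, with the six functors, the four adjunctions,
the isomorphism conditions and the identification of `A` with `Ker e`. -/
structure Recollement (A : Type u) (B : Type u₁) (C : Type u₂)
    [Category.{v} A] [Category.{v₁} B] [Category.{v₂} C]
    [Abelian A] [Abelian B] [Abelian C] where
  i : A ⥤ B
  p : B ⥤ A
  q : B ⥤ A
  e : B ⥤ C
  l : C ⥤ B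
  r : C ⥤ B
  adj_qi : q ⊣ i
  adj_ip : i ⊣ p
  adj_le : l ⊣ e
  adj_er : e ⊣ r
  counit_er_iso : IsIso adj_er.counit
  unit_le_iso : IsIso adj_le.unit
  counit_qi_iso : IsIso adj_qi.counit
  unit_ip_iso : IsIso adj_ip.unit
  ker_e : ∀ b : B, (∃ a : A, Nonempty (i.obj a ≅ b)) ↔ IsZero (e.obj b)

namespace Recollement

variable {A : Type u} {B : Type u₁} {C : Type u₂}
    [Category.{v} A] [Category.{v₁} B] [Category.{v₂} C]
    [Abelian A] [Abelian B] [Abelian C] (R : Recollement A B C)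

/-- The canonical map `ℓ(M) ⟶ r(M)`, adjoint to the inverse of the counit `e(r(M)) ≅ M`. -/
noncomputable def γ (M : C) : R.l.obj M ⟶ R.r.obj M :=
  (R.adj_le.homEquiv M (R.r.obj M)).symm
    (letI := R.counit_er_iso; inv (R.adj_er.counit.app M))

/-- The intermediate extension `c(M) = Im(ℓ(M) → r(M))`. -/
noncomputable def c (M : C) : B := Limits.image (R.γ M)

end Recollement

variable {A : Type u} {B : Type u₁} {C : Type u₂}
    [Category.{v} A] [Category.{v₁} B] [Category.{v₂} C]
    [Abelian A] [Abelian B] [Abelian C]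

/-- An object `F` of the middle category of a recollement is stable if every morphism to it
from an object killed by `e` is zero. -/
def Recollement.Stable (R : Recollement A B C) (F : B) : Prop :=
  ∀ (G : B) (f : G ⟶ F), IsZero (R.e.obj G) → f = 0

/-- An object `F` of the middle category of a recollement is costable if every morphism from
it to an object killed by `e` is zero. -/
def Recollement.Costable (R : Recollement A B C) (F : B) : Prop :=
  ∀ (G : B) (f : F ⟶ G), IsZero (R.e.obj G) → f = 0

/-! Morphisms from an object killed by `e` into `r(M)`, and from `ℓ(M)` to such an object,
vanish by adjunction; as a subobject of `r(M)` and a quotient of `ℓ(M)`, `c(M)` is bistable.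
Conversely, for bistable `F` the map `γ(e F)` factors as the counit `ℓ(e F) ⟶ F` followed by
the unit `F ⟶ r(e F)`. Both become isomorphisms under the exact functor `e`, so `e` kills their
cokernel and kernel, and costability and stability make the counit epi and the unit mono.
Hence `F` is the image of `γ(e F)`. -/

namespace CategoryTheory.Adjunction

variable {C D : Type*} [Category C] [Category D] {L : C ⥤ D} {G : D ⥤ C}

lemma hom_ext_of_isZero_left_obj (adj : L ⊣ G) {X : C} {Y : D} (hX : IsZero (L.obj X))
    (f g : X ⟶ G.obj Y) : f = g :=
  (adj.homEquiv X Y).symm.injective (hX.eq_of_src _ _)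

lemma hom_ext_of_isZero_right_obj (adj : L ⊣ G) {X : C} {Y : D} (hY : IsZero (G.obj Y))
    (f g : L.obj X ⟶ Y) : f = g :=
  (adj.homEquiv X Y).injective (hY.eq_of_tgt _ _)

end CategoryTheory.Adjunction

namespace Recollement

variable (R : Recollement A B C)

lemma stable_r_obj (M : C) : R.Stable (R.r.obj M) :=
  fun _ _ hG => R.adj_er.hom_ext_of_isZero_left_obj hG _ _

lemma costable_l_obj (M : C) : R.Costable (R.l.obj M) :=
  fun _ _ hG => R.adj_le.hom_ext_of_isZero_right_obj hG _ _

variable {R}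

lemma Stable.of_mono {F F' : B} (hF' : R.Stable F') (m : F ⟶ F') [Mono m] : R.Stable F :=
  fun G f hG => (cancel_mono m).mp (by rw [zero_comp]; exact hF' G _ hG)

lemma Costable.of_epi {F F' : B} (hF : R.Costable F) (p : F ⟶ F') [Epi p] : R.Costable F' :=
  fun G f hG => (cancel_epi p).mp (by rw [comp_zero]; exact hF G _ hG)

lemma Stable.mono_of_mono_e_map {F Y : B} (hF : R.Stable F) (f : F ⟶ Y)
    [Mono (R.e.map f)] : Mono f := by
  have := R.adj_le.rightAdjoint_preservesLimits
  refine Abelian.mono_of_kernel_ι_eq_zero f (hF _ _ ?_)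
  exact (isZero_kernel_of_mono (R.e.map f)).of_iso (PreservesKernel.iso R.e f)

lemma Costable.epi_of_epi_e_map {X F : B} (hF : R.Costable F) (f : X ⟶ F)
    [Epi (R.e.map f)] : Epi f := by
  have := R.adj_er.leftAdjoint_preservesColimits
  refine Abelian.epi_of_cokernel_π_eq_zero f (hF _ _ ?_)
  exact (isZero_cokernel_of_epi (R.e.map f)).of_iso (PreservesCokernel.iso R.e f)

variable (R)

lemma stable_c (M : C) : R.Stable (R.c M) :=
  (R.stable_r_obj M).of_mono (F := image (R.γ M)) (image.ι _)

lemma costable_c (M : C) : R.Costable (R.c M) :=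
  (R.costable_l_obj M).of_epi (F' := image (R.γ M)) (factorThruImage _)

lemma counit_le_comp_unit_er (F : B) :
    R.adj_le.counit.app F ≫ R.adj_er.unit.app F = R.γ (R.e.obj F) := by
  have := R.counit_er_iso
  rw [γ, Equiv.eq_symm_apply, Adjunction.homEquiv_unit, Functor.map_comp,
    R.adj_le.right_triangle_components_assoc]
  exact IsIso.eq_inv_of_inv_hom_id (R.adj_er.left_triangle_components F)

instance isIso_e_map_counit_le (F : B) : IsIso (R.e.map (R.adj_le.counit.app F)) :=
  have := R.unit_le_iso
  isIso_of_hom_comp_eq_id _ (R.adj_le.right_triangle_components F)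

instance isIso_e_map_unit_er (F : B) : IsIso (R.e.map (R.adj_er.unit.app F)) :=
  have := R.counit_er_iso
  isIso_of_comp_hom_eq_id _ (R.adj_er.left_triangle_components F)

end Recollement

/-- an object `F` of the middle category is bistable (stable and costable) if
and only if `F ≅ c (e F)`. -/
theorem recollement_bistable_iff (R : Recollement A B C) (F : B) :
    (R.Stable F ∧ R.Costable F) ↔ Nonempty (F ≅ R.c (R.e.obj F)) := by
  constructor
  · rintro ⟨hs, hc⟩
    have := hc.epi_of_epi_e_map (R.adj_le.counit.app F)
    have := hs.mono_of_mono_e_map (R.adj_er.unit.app F)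
    have := strongEpi_of_epi (R.adj_le.counit.app F)
    exact ⟨image.isoStrongEpiMono _ _ (R.counit_le_comp_unit_er F)⟩
  · rintro ⟨i⟩
    exact ⟨(R.stable_c _).of_mono i.hom, (R.costable_c _).of_epi i.inv⟩
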